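/- arXiv:math/9911038 — 3 statements merged into one kernel-verified Lean document; each statement's English description precedes it below -/
import Mathlib

section
/- Let E be a real vector space of dimension 2q with q ≥ 3, and let L ⊆ E^c be a three-dimensional complex subspace of real index zero. Then there exist q-dimensional complex subspaces S₁, S₂ ⊆ E^c, each of real index zero, such that S₁ ∩ S₂ = L. -/
open TensorProduct Complex Submodule Module

/-- The canonical inclusion `E → E^c = ℂ ⊗[ℝ] E` of a real vector space into its
complexification. -/
noncomputable def cplIncl (E : Type*) [AddCommGroup E] [Module ℝ E] : E →ₗ[ℝ] ℂ ⊗[ℝ] E :=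
  TensorProduct.mk ℝ ℂ E 1

/-- The conjugation `V ↦ V̄` of the complexification: the conjugate-linear involution
fixing `E ⊆ E^c`. -/
noncomputable def cplConj (E : Type*) [AddCommGroup E] [Module ℝ E] :
    ℂ ⊗[ℝ] E →ₗ[ℝ] ℂ ⊗[ℝ] E :=
  LinearMap.rTensor E Complex.conjAe.toLinearMap

/-- A complex subspace `S ⊆ E^c` has real index zero if `S ∩ S̄ = 0`, i.e. any `v ∈ S`
whose conjugate also lies in `S` (equivalently `v ∈ S ∩ S̄`) vanishes. -/
def RealIndexZero {E : Type*} [AddCommGroup E] [Module ℝ E]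
    (S : Submodule ℂ (ℂ ⊗[ℝ] E)) : Prop :=
  ∀ v ∈ S, cplConj E v ∈ S → v = 0

section Aux

variable {E : Type*} [AddCommGroup E] [Module ℝ E]

lemma cplIncl_apply (x : E) : cplIncl E x = (1:ℂ) ⊗ₜ[ℝ] x := rfl

lemma cplConj_tmul (c : ℂ) (x : E) :
    cplConj E (c ⊗ₜ[ℝ] x) = (starRingEnd ℂ c) ⊗ₜ[ℝ] x := rfl

lemma cplConj_incl (x : E) : cplConj E (cplIncl E x) = cplIncl E x := by
  rw [cplIncl_apply, cplConj_tmul, map_one]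

lemma cplConj_conj (v : ℂ ⊗[ℝ] E) : cplConj E (cplConj E v) = v := by
  induction v using TensorProduct.induction_on with
  | zero => simp
  | tmul c x => simp [cplConj_tmul]
  | add x y hx hy => rw [map_add, map_add, hx, hy]

lemma cplConj_smul (c : ℂ) (v : ℂ ⊗[ℝ] E) :
    cplConj E (c • v) = (starRingEnd ℂ c) • cplConj E v := by
  induction v using TensorProduct.induction_on with
  | zero => simp
  | tmul a x => rw [smul_tmul', cplConj_tmul, cplConj_tmul, smul_tmul', smul_eq_mul,
      smul_eq_mul, map_mul]
  | add x y hx hy => rw [smul_add, map_add, hx, hy, map_add, smul_add]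

/-- Extraction of the real part: `c ⊗ x ↦ c.re • x`. -/
noncomputable def reMap (E : Type*) [AddCommGroup E] [Module ℝ E] :
    ℂ ⊗[ℝ] E →ₗ[ℝ] E :=
  TensorProduct.lift ((LinearMap.lsmul ℝ E).comp Complex.reLm)

/-- Extraction of the imaginary part: `c ⊗ x ↦ c.im • x`. -/
noncomputable def imMap (E : Type*) [AddCommGroup E] [Module ℝ E] :
    ℂ ⊗[ℝ] E →ₗ[ℝ] E :=
  TensorProduct.lift ((LinearMap.lsmul ℝ E).comp Complex.imLm)

lemma reMap_tmul (c : ℂ) (x : E) : reMap E (c ⊗ₜ[ℝ] x) = c.re • x := rfl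
lemma imMap_tmul (c : ℂ) (x : E) : imMap E (c ⊗ₜ[ℝ] x) = c.im • x := rfl

lemma cplIncl_smul_eq (r : ℝ) (x : E) :
    cplIncl E (r • x) = (r : ℂ) ⊗ₜ[ℝ] x := by
  rw [map_smul, cplIncl_apply, smul_tmul', Complex.real_smul, mul_one]

lemma smul_cplIncl (c : ℂ) (x : E) : c • cplIncl E x = c ⊗ₜ[ℝ] x := by
  rw [cplIncl_apply, smul_tmul', smul_eq_mul, mul_one]

lemma cpl_decomp (v : ℂ ⊗[ℝ] E) :
    v = cplIncl E (reMap E v) + I • cplIncl E (imMap E v) := by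
  induction v using TensorProduct.induction_on with
  | zero => simp
  | tmul c x =>
      rw [reMap_tmul, imMap_tmul, cplIncl_smul_eq, cplIncl_smul_eq, smul_tmul',
        smul_eq_mul, ← add_tmul]
      congr 1
      rw [mul_comm, Complex.re_add_im]
  | add x y hx hy =>
      rw [map_add, map_add, map_add, map_add, smul_add]
      conv_lhs => rw [hx, hy]
      abel

lemma cpl_conj_decomp (v : ℂ ⊗[ℝ] E) :
    cplConj E v = cplIncl E (reMap E v) - I • cplIncl E (imMap E v) := by
  have h := congrArg (cplConj E) (cpl_decomp v)
  rw [map_add, cplConj_smul, cplConj_incl, cplConj_incl, Complex.conj_I, neg_smul] at h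
  rw [h]; abel

lemma linearIndependent_cplIncl {ιt : Type*} {v : ιt → E} (hv : LinearIndependent ℝ v) :
    LinearIndependent ℂ fun i => cplIncl E (v i) := by
  rw [linearIndependent_iff] at hv ⊢
  intro l hl
  have key : ∀ (φ : ℂ →ₗ[ℝ] ℝ),
      (Finsupp.mapRange (fun c => φ c) (by simp) l).sum (fun i r => r • v i) = 0 →
      Finsupp.mapRange (fun c => φ c) (by simp) l = 0 := by
    intro φ h
    exact hv _ (by rwa [Finsupp.linearCombination_apply])
  have hsum : ∀ (φ : ℂ →ₗ[ℝ] ℝ),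
      (Finsupp.mapRange (fun c => φ c) (by simp) l).sum (fun i r => r • v i)
        = (TensorProduct.lift ((LinearMap.lsmul ℝ E).comp φ))
            ((Finsupp.linearCombination ℂ fun i => cplIncl E (v i)) l) := by
    intro φ
    rw [Finsupp.linearCombination_apply, map_finsuppSum,
      Finsupp.sum_mapRange_index (by simp)]
    refine Finsupp.sum_congr fun i _ => ?_
    rw [smul_cplIncl]
    rfl
  have hre := key Complex.reLm (by rw [hsum, hl, map_zero])
  have him := key Complex.imLm (by rw [hsum, hl, map_zero])
  ext i
  have h1 := congrArg (fun f => f i) hre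
  have h2 := congrArg (fun f => f i) him
  simp only [Finsupp.mapRange_apply, Finsupp.coe_zero, Pi.zero_apply] at h1 h2
  exact Complex.ext h1 h2

lemma conj_mem_span (s : Set (ℂ ⊗[ℝ] E)) (hs : ∀ u ∈ s, cplConj E u ∈ span ℂ s) :
    ∀ v ∈ span ℂ s, cplConj E v ∈ span ℂ s := by
  intro v hv
  induction hv using Submodule.span_induction with
  | mem x hx => exact hs x hx
  | zero => simp
  | add x y hx hy ihx ihy => rw [map_add]; exact add_mem ihx ihy
  | smul c x hx ihx => rw [cplConj_smul]; exact Submodule.smul_mem _ _ ihx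

lemma unique_decomp {A B : Submodule ℂ (ℂ ⊗[ℝ] E)} (hAB : A ⊓ B = ⊥)
    {a a' b b' : ℂ ⊗[ℝ] E} (ha : a ∈ A) (ha' : a' ∈ A) (hb : b ∈ B) (hb' : b' ∈ B)
    (heq : a + b = a' + b') : a = a' ∧ b = b' := by
  have hsub : a - a' = b' - b := by
    rw [sub_eq_sub_iff_add_eq_add, heq]; abel
  have hmem : a - a' ∈ A ⊓ B := by
    refine Submodule.mem_inf.2 ⟨sub_mem ha ha', ?_⟩
    rw [hsub]; exact sub_mem hb' hb
  rw [hAB, Submodule.mem_bot, sub_eq_zero] at hmem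
  refine ⟨hmem, ?_⟩
  have := heq
  rw [hmem] at this
  exact add_left_cancel this

lemma parts_mem (S : Submodule ℂ (ℂ ⊗[ℝ] E)) (v : ℂ ⊗[ℝ] E)
    (hv : v ∈ S) (hcv : cplConj E v ∈ S) :
    cplIncl E (reMap E v) ∈ S ∧ cplIncl E (imMap E v) ∈ S := by
  have h2 : v + cplConj E v = (2:ℂ) • cplIncl E (reMap E v) := by
    rw [cpl_conj_decomp v]
    nth_rewrite 1 [cpl_decomp v]
    rw [two_smul]; abel
  have h3 : v - cplConj E v = ((2:ℂ) * I) • cplIncl E (imMap E v) := by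
    rw [cpl_conj_decomp v]
    nth_rewrite 1 [cpl_decomp v]
    rw [mul_smul, two_smul]
    abel
  constructor
  · have : cplIncl E (reMap E v) = ((2:ℂ)⁻¹) • (v + cplConj E v) := by
      rw [h2, smul_smul]; norm_num
    rw [this]; exact Submodule.smul_mem _ _ (add_mem hv hcv)
  · have hne : (2:ℂ) * I ≠ 0 := mul_ne_zero two_ne_zero I_ne_zero
    have : cplIncl E (imMap E v) = (((2:ℂ) * I)⁻¹) • (v - cplConj E v) := by
      rw [h3, smul_smul, inv_mul_cancel₀ hne, one_smul]
    rw [this]; exact Submodule.smul_mem _ _ (sub_mem hv hcv)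

lemma span_im_eq (T : Submodule ℝ E) {k : Type*} (b : Basis k ℝ T) :
    span ℂ (cplIncl E '' ↑T) = span ℂ (Set.range fun i => cplIncl E ((b i : E))) := by
  apply le_antisymm
  · rw [Submodule.span_le]
    rintro _ ⟨y, hy, rfl⟩
    have hspanT : span ℝ (Set.range fun i => ((b i : E))) = T := by
      have h1 : (Set.range fun i => ((b i : E))) = T.subtype '' Set.range b := by
        rw [← Set.range_comp]; rfl
      rw [h1, ← Submodule.map_span, b.span_eq, Submodule.map_subtype_top]
    have hy' : y ∈ span ℝ (Set.range fun i => ((b i : E))) := by rw [hspanT]; exact hy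
    have hmem : cplIncl E y ∈
        Submodule.map (cplIncl E) (span ℝ (Set.range fun i => ((b i : E)))) :=
      Submodule.mem_map_of_mem hy'
    rw [Submodule.map_span, ← Set.range_comp] at hmem
    have hle := Submodule.span_le_restrictScalars ℝ ℂ
      (Set.range ((cplIncl E) ∘ fun i => ((b i : E))))
    have := hle hmem
    simpa [Function.comp_def] using this
  · rw [Submodule.span_le]
    rintro _ ⟨i, rfl⟩
    exact Submodule.subset_span ⟨(b i : E), (b i).2, rfl⟩

end Aux

set_option maxHeartbeats 2000000 in
/-- If `dim_ℝ E = 2q`, `q ≥ 3`, every three-dimensional complex subspace `L ⊆ E^c` of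
real index zero is the intersection of two `q`-dimensional complex subspaces of real
index zero. -/
theorem exists_pair_realIndexZero_inf_eq_of_finrank_three
    (E : Type*) [AddCommGroup E] [Module ℝ E] [FiniteDimensional ℝ E]
    (q : ℕ) (hq : 3 ≤ q) (hdim : finrank ℝ E = 2 * q)
    (L : Submodule ℂ (ℂ ⊗[ℝ] E)) (hL : finrank ℂ L = 3) (hLri : RealIndexZero L) :
    ∃ S₁ S₂ : Submodule ℂ (ℂ ⊗[ℝ] E),
      finrank ℂ S₁ = q ∧ RealIndexZero S₁ ∧
      finrank ℂ S₂ = q ∧ RealIndexZero S₂ ∧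
      S₁ ⊓ S₂ = L := by
  classical
  -- the conjugate subspace L̄
  let Lbar : Submodule ℂ (ℂ ⊗[ℝ] E) :=
    { carrier := {v | cplConj E v ∈ L}
      add_mem' := fun {a b} ha hb => by
        simp only [Set.mem_setOf_eq, map_add] at *
        exact L.add_mem ha hb
      zero_mem' := by simp
      smul_mem' := fun c v hv => by
        simp only [Set.mem_setOf_eq, cplConj_smul] at *
        exact L.smul_mem _ hv }
  have mem_Lbar : ∀ v : ℂ ⊗[ℝ] E, v ∈ Lbar ↔ cplConj E v ∈ L := fun v => Iff.rfl
  -- dimension of L̄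
  let σe : (ℂ ⊗[ℝ] E) ≃ₗ[ℝ] (ℂ ⊗[ℝ] E) := LinearEquiv.ofInvolutive (cplConj E) cplConj_conj
  have hmap : Submodule.map (σe : (ℂ ⊗[ℝ] E) →ₗ[ℝ] (ℂ ⊗[ℝ] E)) (Lbar.restrictScalars ℝ)
      = L.restrictScalars ℝ := by
    ext v
    simp only [Submodule.mem_map, Submodule.restrictScalars_mem]
    constructor
    · rintro ⟨u, hu, rfl⟩; exact hu
    · intro hv
      refine ⟨cplConj E v, ?_, ?_⟩
      · show cplConj E (cplConj E v) ∈ L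
        rwa [cplConj_conj]
      · show cplConj E (cplConj E v) = v
        rw [cplConj_conj]
  have hfinr : ∀ p : Submodule ℂ (ℂ ⊗[ℝ] E),
      finrank ℝ (p.restrictScalars ℝ) = 2 * finrank ℂ p := by
    intro p
    have h := Module.finrank_mul_finrank ℝ ℂ p
    rw [Complex.finrank_real_complex] at h
    have h2 : finrank ℝ (p.restrictScalars ℝ) = finrank ℝ p :=
      LinearEquiv.finrank_eq
        ((Submodule.restrictScalarsEquiv ℝ ℂ (ℂ ⊗[ℝ] E) p).restrictScalars ℝ)
    omega
  have hLbar_r : finrank ℝ (Lbar.restrictScalars ℝ) = finrank ℝ (L.restrictScalars ℝ) := by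
    have h := LinearEquiv.finrank_eq (σe.submoduleMap (Lbar.restrictScalars ℝ))
    rw [hmap] at h
    exact h
  have hLbar : finrank ℂ Lbar = 3 := by
    have h1 := hfinr Lbar
    have h2 := hfinr L
    omega
  -- L ⊓ L̄ = ⊥
  have hLLbar : L ⊓ Lbar = ⊥ := by
    rw [eq_bot_iff]
    rintro v hv
    have h1 := (Submodule.mem_inf.1 hv).1
    have h2 := (Submodule.mem_inf.1 hv).2
    exact Submodule.mem_bot _ |>.2 (hLri v h1 h2)
  set F := L ⊔ Lbar with hFdef
  have hF6 : finrank ℂ F = 6 := by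
    have h := Submodule.finrank_sup_add_finrank_inf_eq L Lbar
    rw [← hFdef, hLLbar, finrank_bot, hL, hLbar] at h
    omega
  -- F is conjugation stable
  have hFσ : ∀ v ∈ F, cplConj E v ∈ F := by
    intro v hv
    obtain ⟨a, ha, b, hb, rfl⟩ := Submodule.mem_sup.1 hv
    rw [map_add]
    refine add_mem (Submodule.mem_sup_right ?_) (Submodule.mem_sup_left ?_)
    · show cplConj E (cplConj E a) ∈ L
      rwa [cplConj_conj]
    · exact hb
  -- the real points of F
  set F_E : Submodule ℝ E := Submodule.comap (cplIncl E) (F.restrictScalars ℝ) with hFE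
  have mem_FE : ∀ x : E, x ∈ F_E ↔ cplIncl E x ∈ F := fun x => Iff.rfl
  have hFspan : F = span ℂ (cplIncl E '' ↑F_E) := by
    apply le_antisymm
    · intro v hv
      obtain ⟨h1, h2⟩ := parts_mem F v hv (hFσ v hv)
      rw [cpl_decomp v]
      exact add_mem (Submodule.subset_span ⟨reMap E v, h1, rfl⟩)
        (Submodule.smul_mem _ _ (Submodule.subset_span ⟨imMap E v, h2, rfl⟩))
    · rw [Submodule.span_le]
      rintro _ ⟨y, hy, rfl⟩
      exact hy
  -- a basis of F_E and the dimension count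
  let xb := finBasis ℝ F_E
  have hxspan := span_im_eq F_E xb
  have hxind : LinearIndependent ℂ fun i => cplIncl E ((xb i : E)) :=
    linearIndependent_cplIncl (xb.linearIndependent.map' F_E.subtype (Submodule.ker_subtype _))
  have hm : finrank ℝ F_E = 6 := by
    have hc := finrank_span_eq_card hxind
    rw [← hxspan, ← hFspan, hF6] at hc
    simpa using hc.symm
  -- complement
  obtain ⟨G, hGc⟩ := Submodule.exists_isCompl F_E
  set n := q - 3 with hn
  have hGdim : finrank ℝ G = 2 * n := by
    have h := Submodule.finrank_add_eq_of_isCompl hGc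
    rw [hm, hdim] at h
    omega
  let gb : Basis (Fin n × Fin 2) ℝ G :=
    (finBasis ℝ G).reindex ((finCongr (by rw [hGdim]; ring)).trans finProdFinEquiv.symm)
  set g : Fin n × Fin 2 → E := fun p => ((gb p : G) : E) with hg
  have hgmem : ∀ p, g p ∈ G := fun p => (gb p).2
  have hgind : LinearIndependent ℝ g :=
    gb.linearIndependent.map' G.subtype (Submodule.ker_subtype _)
  set Gc : Submodule ℂ (ℂ ⊗[ℝ] E) := span ℂ (Set.range fun p => cplIncl E (g p)) with hGcdef
  have hGspan : span ℂ (cplIncl E '' ↑G) = Gc := span_im_eq G gb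
  have hGcdim : finrank ℂ Gc = 2 * n := by
    have h := finrank_span_eq_card (linearIndependent_cplIncl hgind)
    rw [← hGcdef] at h
    simpa [Fintype.card_prod, mul_comm] using h
  have hGcσ : ∀ v ∈ Gc, cplConj E v ∈ Gc := by
    apply conj_mem_span
    rintro _ ⟨p, rfl⟩
    rw [cplConj_incl]
    exact Submodule.subset_span ⟨p, rfl⟩
  -- F ⊔ Gc = ⊤, F ⊓ Gc = ⊥
  have hdimtop : finrank ℂ (ℂ ⊗[ℝ] E) = 2 * q := by
    rw [Module.finrank_baseChange, hdim]
  have htop : F ⊔ Gc = ⊤ := by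
    rw [eq_top_iff]
    intro v hvtop
    clear hvtop
    induction v using TensorProduct.induction_on with
    | zero => exact zero_mem _
    | tmul c x =>
        have hx : x ∈ F_E ⊔ G := by rw [hGc.sup_eq_top]; trivial
        obtain ⟨u, hu, wg, hwg, rfl⟩ := Submodule.mem_sup.1 hx
        have h1 : cplIncl E u ∈ F := hu
        have h2 : cplIncl E wg ∈ Gc := by
          rw [← hGspan]; exact Submodule.subset_span ⟨wg, hwg, rfl⟩
        have hrw : c ⊗ₜ[ℝ] (u + wg) = c • (cplIncl E u + cplIncl E wg) := by
          rw [smul_add, smul_cplIncl, smul_cplIncl, tmul_add]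
        rw [hrw]
        exact Submodule.smul_mem _ _
          (add_mem (Submodule.mem_sup_left h1) (Submodule.mem_sup_right h2))
    | add x y hx hy => exact add_mem hx hy
  have hinf : F ⊓ Gc = ⊥ := by
    have h := Submodule.finrank_sup_add_finrank_inf_eq F Gc
    rw [htop, finrank_top, hdimtop, hF6, hGcdim] at h
    have h0 : finrank ℂ ↥(F ⊓ Gc) = 0 := by omega
    exact Submodule.finrank_eq_zero.1 h0
  -- the two isotropic halves of Gc
  set w : Fin n → ℂ ⊗[ℝ] E :=
    fun k => cplIncl E (g (k, 0)) + I • cplIncl E (g (k, 1)) with hw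
  set w' : Fin n → ℂ ⊗[ℝ] E :=
    fun k => cplIncl E (g (k, 0)) - I • cplIncl E (g (k, 1)) with hw'
  set W : Submodule ℂ (ℂ ⊗[ℝ] E) := span ℂ (Set.range w) with hWdef
  set W' : Submodule ℂ (ℂ ⊗[ℝ] E) := span ℂ (Set.range w') with hW'def
  have hσw : ∀ k, cplConj E (w k) = w' k := by
    intro k
    simp only [hw, hw', map_add, cplConj_smul, cplConj_incl, Complex.conj_I, neg_smul]
    abel
  have hσw' : ∀ k, cplConj E (w' k) = w k := by
    intro k
    rw [← hσw k, cplConj_conj]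
  have hWle : W ≤ Gc := by
    rw [hWdef, Submodule.span_le]
    rintro _ ⟨k, rfl⟩
    exact add_mem (Submodule.subset_span ⟨(k, 0), rfl⟩)
      (Submodule.smul_mem _ _ (Submodule.subset_span ⟨(k, 1), rfl⟩))
  have hW'le : W' ≤ Gc := by
    rw [hW'def, Submodule.span_le]
    rintro _ ⟨k, rfl⟩
    exact sub_mem (Submodule.subset_span ⟨(k, 0), rfl⟩)
      (Submodule.smul_mem _ _ (Submodule.subset_span ⟨(k, 1), rfl⟩))
  have hsum0 : ∀ k, w k + w' k = (2:ℂ) • cplIncl E (g (k, 0)) := by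
    intro k
    simp only [hw, hw']
    rw [two_smul]
    abel
  have hsum1 : ∀ k, w k - w' k = ((2:ℂ) * I) • cplIncl E (g (k, 1)) := by
    intro k
    simp only [hw, hw']
    rw [mul_smul, two_smul]
    abel
  have hsupWW' : W ⊔ W' = Gc := by
    apply le_antisymm (sup_le hWle hW'le)
    rw [hGcdef, Submodule.span_le]
    rintro _ ⟨⟨k, i⟩, rfl⟩
    fin_cases i
    · show cplIncl E (g (k, 0)) ∈ W ⊔ W'
      have h : cplIncl E (g (k, 0)) = ((2:ℂ)⁻¹) • (w k + w' k) := by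
        rw [hsum0 k, smul_smul]
        norm_num
      rw [h]
      exact Submodule.smul_mem _ _
        (add_mem (Submodule.mem_sup_left (Submodule.subset_span ⟨k, rfl⟩))
          (Submodule.mem_sup_right (Submodule.subset_span ⟨k, rfl⟩)))
    · show cplIncl E (g (k, 1)) ∈ W ⊔ W'
      have hne : (2:ℂ) * I ≠ 0 := mul_ne_zero two_ne_zero I_ne_zero
      have h : cplIncl E (g (k, 1)) = (((2:ℂ) * I)⁻¹) • (w k - w' k) := by
        rw [hsum1 k, smul_smul, inv_mul_cancel₀ hne, one_smul]
      rw [h]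
      exact Submodule.smul_mem _ _
        (sub_mem (Submodule.mem_sup_left (Submodule.subset_span ⟨k, rfl⟩))
          (Submodule.mem_sup_right (Submodule.subset_span ⟨k, rfl⟩)))
  have hWcard : finrank ℂ W ≤ n := by
    have h := finrank_range_le_card (R := ℂ) w
    simpa [Set.finrank, ← hWdef] using h
  have hW'card : finrank ℂ W' ≤ n := by
    have h := finrank_range_le_card (R := ℂ) w'
    simpa [Set.finrank, ← hW'def] using h
  have hWW' := Submodule.finrank_sup_add_finrank_inf_eq W W'
  rw [hsupWW', hGcdim] at hWW'
  have hWn : finrank ℂ W = n := by omega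
  have hW'n : finrank ℂ W' = n := by omega
  have hinfWW' : W ⊓ W' = ⊥ := by
    have h0 : finrank ℂ ↥(W ⊓ W') = 0 := by omega
    exact Submodule.finrank_eq_zero.1 h0
  -- conjugation swaps W and W'
  have hσWW' : ∀ v ∈ W, cplConj E v ∈ W' := by
    intro v hv
    induction hv using Submodule.span_induction with
    | mem x hx =>
        obtain ⟨k, rfl⟩ := hx
        rw [hσw k]
        exact Submodule.subset_span ⟨k, rfl⟩
    | zero => simp
    | add x y hx hy ihx ihy => rw [map_add]; exact add_mem ihx ihy
    | smul c x hx ihx => rw [cplConj_smul]; exact Submodule.smul_mem _ _ ihx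
  have hσW'W : ∀ v ∈ W', cplConj E v ∈ W := by
    intro v hv
    induction hv using Submodule.span_induction with
    | mem x hx =>
        obtain ⟨k, rfl⟩ := hx
        rw [hσw' k]
        exact Submodule.subset_span ⟨k, rfl⟩
    | zero => simp
    | add x y hx hy ihx ihy => rw [map_add]; exact add_mem ihx ihy
    | smul c x hx ihx => rw [cplConj_smul]; exact Submodule.smul_mem _ _ ihx
  -- basic positioning
  have hLF : L ≤ F := le_sup_left
  have hLbarF : Lbar ≤ F := le_sup_right
  have hLW : L ⊓ W = ⊥ := by
    rw [eq_bot_iff, ← hinf]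
    exact inf_le_inf hLF hWle
  have hLW' : L ⊓ W' = ⊥ := by
    rw [eq_bot_iff, ← hinf]
    exact inf_le_inf hLF hW'le
  -- dimensions of the candidates
  have hq3 : q = 3 + n := by omega
  have hS1dim : finrank ℂ ↥(L ⊔ W) = q := by
    have h := Submodule.finrank_sup_add_finrank_inf_eq L W
    rw [hLW, finrank_bot, hL, hWn] at h
    omega
  have hS2dim : finrank ℂ ↥(L ⊔ W') = q := by
    have h := Submodule.finrank_sup_add_finrank_inf_eq L W'
    rw [hLW', finrank_bot, hL, hW'n] at h
    omega
  -- real index zero for the candidates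
  have hconjL : ∀ l, l ∈ L → cplConj E l ∈ F := by
    intro l hl
    refine hLbarF ?_
    show cplConj E (cplConj E l) ∈ L
    rwa [cplConj_conj]
  have hRIZ1 : RealIndexZero (L ⊔ W) := by
    intro v hv hσv
    obtain ⟨l, hl, w0, hw0, rfl⟩ := Submodule.mem_sup.1 hv
    obtain ⟨l2, hl2, w2, hw2, heq⟩ := Submodule.mem_sup.1 hσv
    rw [map_add] at heq
    obtain ⟨hll, hww⟩ := unique_decomp hinf (hLF hl2) (hconjL l hl) (hWle hw2)
      (hW'le (hσWW' w0 hw0)) heq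
    have hl0 : l = 0 := by
      refine hLri l hl ?_
      rw [← hll]; exact hl2
    have hw00 : cplConj E w0 = 0 := by
      have : cplConj E w0 ∈ W ⊓ W' :=
        Submodule.mem_inf.2 ⟨by rw [← hww]; exact hw2, hσWW' w0 hw0⟩
      rw [hinfWW'] at this
      exact (Submodule.mem_bot _).1 this
    have hw0z : w0 = 0 := by
      have := congrArg (cplConj E) hw00
      rwa [cplConj_conj, map_zero] at this
    rw [hl0, hw0z, add_zero]
  have hRIZ2 : RealIndexZero (L ⊔ W') := by
    intro v hv hσv
    obtain ⟨l, hl, w0, hw0, rfl⟩ := Submodule.mem_sup.1 hv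
    obtain ⟨l2, hl2, w2, hw2, heq⟩ := Submodule.mem_sup.1 hσv
    rw [map_add] at heq
    obtain ⟨hll, hww⟩ := unique_decomp hinf (hLF hl2) (hconjL l hl) (hW'le hw2)
      (hWle (hσW'W w0 hw0)) heq
    have hl0 : l = 0 := by
      refine hLri l hl ?_
      rw [← hll]; exact hl2
    have hw00 : cplConj E w0 = 0 := by
      have : cplConj E w0 ∈ W ⊓ W' :=
        Submodule.mem_inf.2 ⟨hσW'W w0 hw0, by rw [← hww]; exact hw2⟩
      rw [hinfWW'] at this
      exact (Submodule.mem_bot _).1 this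
    have hw0z : w0 = 0 := by
      have := congrArg (cplConj E) hw00
      rwa [cplConj_conj, map_zero] at this
    rw [hl0, hw0z, add_zero]
  -- the intersection
  have hinter : (L ⊔ W) ⊓ (L ⊔ W') = L := by
    apply le_antisymm
    · intro v hv
      obtain ⟨hv1, hv2⟩ := Submodule.mem_inf.1 hv
      obtain ⟨l, hl, w0, hw0, rfl⟩ := Submodule.mem_sup.1 hv1
      obtain ⟨l2, hl2, w2, hw2, heq⟩ := Submodule.mem_sup.1 hv2
      obtain ⟨hll, hww⟩ := unique_decomp hinf (hLF hl2) (hLF hl) (hW'le hw2)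
        (hWle hw0) heq
      have hw0z : w0 = 0 := by
        have : w0 ∈ W ⊓ W' := Submodule.mem_inf.2 ⟨hw0, by rw [← hww]; exact hw2⟩
        rw [hinfWW'] at this
        exact (Submodule.mem_bot _).1 this
      rw [hw0z, add_zero]
      exact hl
    · exact le_inf le_sup_left le_sup_left
  exact ⟨L ⊔ W, L ⊔ W', hS1dim, hRIZ1, hS2dim, hRIZ2, hinter⟩
end

section
/- Let N be a real vector space of dimension 4 and let r : N × N × N → N be an ℝ-trilinear map antisymmetric in its first two arguments (r(X,Y,Z) = −r(Y,X,Z)) such that r(X, Y, Z) + r(Z, Y, X) = ξ(X, Y)·Z + ξ(Z, Y)·X + 2ζ(X, Z)·Y for all X, Y, Z ∈ N, where ξ is an antisymmetric ℝ-bilinear form and ζ is a symmetric ℝ-bilinear form on N. Then ξ(X, Y) = (1/5)·(tr r(X, Y) − alt Ric_r(X, Y)) and ζ(X, Y) = (1/2)·sym Ric_r(X, Y) for all X, Y ∈ N. -/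
open Module

theorem trace_smulRight_aux {N : Type*} [AddCommGroup N] [Module ℝ N] [FiniteDimensional ℝ N]
    (f : N →ₗ[ℝ] ℝ) (x : N) : LinearMap.trace ℝ N (f.smulRight x) = f x := by
  classical
  let b := Module.finBasis ℝ N
  rw [LinearMap.trace_eq_matrix_trace ℝ b, Matrix.trace]
  conv_rhs => rw [← b.sum_repr x]
  simp [Matrix.diag, LinearMap.toMatrix_apply, mul_comm]
  conv_rhs => rw [← b.sum_repr x]
  rw [map_sum]
  simp only [map_smul, smul_eq_mul]
  exact Finset.sum_congr rfl fun i _ => mul_comm _ _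

/-- If `dim_ℝ N = 4` and the `ℝ`-trilinear map `r`, antisymmetric in its first two
arguments, satisfies `r(X,Y,Z) + r(Z,Y,X) = ξ(X,Y)·Z + ξ(Z,Y)·X + 2ζ(X,Z)·Y` with `ξ`
antisymmetric and `ζ` symmetric, then `ξ(X,Y) = (tr r(X,Y) − alt Ric_r(X,Y))/5` and
`ζ(X,Y) = sym Ric_r(X,Y)/2`, where `tr r(X,Y) = tr (Z ↦ r(X,Y,Z))` and
`Ric_r(X,Y) = tr (Z ↦ r(Z,X,Y))`. -/
theorem curvature_coeffs_eq_traces_dim_four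
    (N : Type*) [AddCommGroup N] [Module ℝ N] [FiniteDimensional ℝ N]
    (hdim : finrank ℝ N = 4)
    (r : N →ₗ[ℝ] N →ₗ[ℝ] N →ₗ[ℝ] N) (hanti : ∀ X Y : N, r X Y = - r Y X)
    (ξ ζ : N →ₗ[ℝ] N →ₗ[ℝ] ℝ)
    (hξ : ∀ X Y : N, ξ X Y = - ξ Y X) (hζ : ∀ X Y : N, ζ X Y = ζ Y X)
    (h : ∀ X Y Z : N, r X Y Z + r Z Y X = ξ X Y • Z + ξ Z Y • X + (2 * ζ X Z) • Y) :
    ∀ X Y : N,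
      ξ X Y = (1 / 5) * (LinearMap.trace ℝ N (r X Y)
          - (LinearMap.trace ℝ N ((r.flip X).flip Y)
              - LinearMap.trace ℝ N ((r.flip Y).flip X)) / 2) ∧
      ζ X Y = (1 / 2) * ((LinearMap.trace ℝ N ((r.flip X).flip Y)
          + LinearMap.trace ℝ N ((r.flip Y).flip X)) / 2) := by
  have key : ∀ X Y : N, LinearMap.trace ℝ N (r X Y)
      + LinearMap.trace ℝ N ((r.flip Y).flip X) = 5 * ξ X Y + 2 * ζ X Y := by
    intro X Y
    have heq : r X Y + (r.flip Y).flip X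
        = ξ X Y • LinearMap.id + (ξ.flip Y).smulRight X
          + ((2 : ℝ) • (ζ X)).smulRight Y := by
      ext Z
      simp only [LinearMap.add_apply, LinearMap.flip_apply, LinearMap.smul_apply,
        LinearMap.smulRight_apply, LinearMap.id_coe, id_eq, smul_eq_mul]
      exact h X Y Z
    have ht := congrArg (LinearMap.trace ℝ N) heq
    simp only [map_add, map_smul, LinearMap.trace_id, hdim, trace_smulRight_aux,
      LinearMap.flip_apply, LinearMap.smul_apply, smul_eq_mul] at ht
    push_cast at ht
    linarith
  intro X Y
  have k1 := key X Y
  have k2 := key Y X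
  have hr : LinearMap.trace ℝ N (r Y X) = - LinearMap.trace ℝ N (r X Y) := by
    rw [hanti Y X, map_neg]
  rw [hr, hξ Y X, hζ Y X] at k2
  constructor <;> linarith
end

section
/- Let N be a real vector space of dimension 2q with q ≥ 2 and let r : N × N × N → N be an ℝ-trilinear map, antisymmetric in its first two arguments, satisfying the first Bianchi identity r(X, Y, Z) + r(Y, Z, X) + r(Z, X, Y) = 0, and of the form r(X, Y, Z) = β(X, Z)·Y − β(Y, Z)·X + (β(X, Y) − β(Y, X))·Z for an ℝ-bilinear form β on N. Then β is uniquely determined by r through traces: alt β(X, Y) = (1/(4q + 2))·tr r(X, Y) and sym β(X, Y) = −(1/(2q − 1))·sym Ric_r(X, Y), hence β(X, Y) = −(1/(2q − 1))·sym Ric_r(X, Y) + (1/(4q + 2))·tr r(X, Y) for all X, Y ∈ N. -/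
open Module

lemma trace_smulRight' (N : Type*) [AddCommGroup N] [Module ℝ N] [FiniteDimensional ℝ N]
    (f : N →ₗ[ℝ] ℝ) (v : N) : LinearMap.trace ℝ N (f.smulRight v) = f v := by
  have h1 : f.smulRight v = (LinearMap.toSpanSingleton ℝ N v) ∘ₗ f := by ext z; simp
  rw [h1, LinearMap.trace_comp_comm']
  have h2 : (f ∘ₗ LinearMap.toSpanSingleton ℝ N v) = (f v) • LinearMap.id := by
    ext; simp [mul_comm]
  rw [h2, map_smul, LinearMap.trace_id]
  simp

/-- If `dim_ℝ N = 2q`, `q ≥ 2`, and the `ℝ`-trilinear map `r`, antisymmetric in its first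
two arguments and satisfying the first Bianchi identity, has the form
`r(X,Y,Z) = β(X,Z)·Y − β(Y,Z)·X + (β(X,Y) − β(Y,X))·Z`, then `β` is determined by traces:
`alt β(X,Y) = tr r(X,Y)/(4q + 2)`, `sym β(X,Y) = −sym Ric_r(X,Y)/(2q − 1)`, hence
`β(X,Y) = −sym Ric_r(X,Y)/(2q − 1) + tr r(X,Y)/(4q + 2)`, where
`tr r(X,Y) = tr (Z ↦ r(X,Y,Z))` and `Ric_r(X,Y) = tr (Z ↦ r(Z,X,Y))`. -/
theorem beta_determined_by_traces_of_bianchi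
    (N : Type*) [AddCommGroup N] [Module ℝ N] [FiniteDimensional ℝ N]
    (q : ℕ) (hq : 2 ≤ q) (hdim : finrank ℝ N = 2 * q)
    (r : N →ₗ[ℝ] N →ₗ[ℝ] N →ₗ[ℝ] N) (hanti : ∀ X Y : N, r X Y = - r Y X)
    (hbianchi : ∀ X Y Z : N, r X Y Z + r Y Z X + r Z X Y = 0)
    (β : N →ₗ[ℝ] N →ₗ[ℝ] ℝ)
    (h : ∀ X Y Z : N, r X Y Z = β X Z • Y - β Y Z • X + (β X Y - β Y X) • Z) :
    ∀ X Y : N,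
      (β X Y - β Y X) / 2 = (1 / (4 * (q : ℝ) + 2)) * LinearMap.trace ℝ N (r X Y) ∧
      (β X Y + β Y X) / 2 =
        -(1 / (2 * (q : ℝ) - 1)) *
          ((LinearMap.trace ℝ N ((r.flip X).flip Y)
            + LinearMap.trace ℝ N ((r.flip Y).flip X)) / 2) ∧
      β X Y =
        -(1 / (2 * (q : ℝ) - 1)) *
            ((LinearMap.trace ℝ N ((r.flip X).flip Y)
              + LinearMap.trace ℝ N ((r.flip Y).flip X)) / 2)
          + (1 / (4 * (q : ℝ) + 2)) * LinearMap.trace ℝ N (r X Y) := by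
  intro X Y
  have htr : ∀ A B : N, LinearMap.trace ℝ N (r A B)
      = β A B - β B A + (β A B - β B A) * (2 * (q : ℝ)) := by
    intro A B
    have hr : r A B = (β A).smulRight B - (β B).smulRight A
        + (β A B - β B A) • LinearMap.id := by
      ext Z; simpa using h A B Z
    rw [hr, map_add, map_sub, trace_smulRight', trace_smulRight', map_smul,
      LinearMap.trace_id, hdim]
    push_cast
    simp only [smul_eq_mul]
    try ring
  have hric : ∀ A B : N, LinearMap.trace ℝ N ((r.flip A).flip B)
      = β B A - (2 * (q : ℝ)) * β A B := by
    intro A B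
    have hr : (r.flip A).flip B = (β.flip B).smulRight A - (β A B) • LinearMap.id
        + (β.flip A - β A).smulRight B := by
      ext Z
      simpa using h Z A B
    rw [hr, map_add, map_sub, trace_smulRight', map_smul, LinearMap.trace_id,
      trace_smulRight', hdim]
    push_cast
    simp only [smul_eq_mul, LinearMap.sub_apply, LinearMap.flip_apply]
    try ring
  rw [htr X Y, hric X Y, hric Y X]
  have hq1 : (4 : ℝ) * q + 2 ≠ 0 := by positivity
  have hq2 : (2 : ℝ) * q - 1 ≠ 0 := by
    have : (2 : ℝ) ≤ q := by exact_mod_cast hq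
    nlinarith
  refine ⟨?_, ?_, ?_⟩ <;> field_simp <;> ring
end
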